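/- arXiv:2405.10581 — 2 statements merged into one kernel-verified Lean document; each statement's English description precedes it below -/
import Mathlib

section
/- ∫_{ℝ} exp(-((x-u)²+(x-v)²)/(2ℓ²))·(1/(√(2π)s))·exp(-(x-m)²/(2s²)) dx = (ℓ/√(ℓ²+2s²))·exp((-ℓ²(v-m)² - ℓ²(u-m)² - s²(v-u)²)/(2ℓ²(ℓ²+2s²))). -/
open MeasureTheory Real

lemma integral_rexp_quadratic' {b : ℝ} (hb : 0 < b) (c d : ℝ) :
    ∫ x : ℝ, Real.exp (-b * x ^ 2 + c * x + d) =
      Real.sqrt (π / b) * Real.exp (d + c ^ 2 / (4 * b)) := by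
  have h : ∀ x : ℝ, -b * x ^ 2 + c * x + d
      = -b * (x - c / (2 * b)) ^ 2 + (d + c ^ 2 / (4 * b)) := by
    intro x; field_simp; ring
  simp_rw [h, Real.exp_add, integral_mul_const]
  rw [integral_sub_right_eq_self (fun x : ℝ => Real.exp (-b * x ^ 2)) (c / (2 * b)),
    integral_gaussian]

theorem integral_gaussian_pair_gaussian_measure (ℓ s u v m : ℝ) (hℓ : 0 < ℓ) (hs : 0 < s) :
    ∫ x : ℝ, Real.exp (-((x - u) ^ 2 + (x - v) ^ 2) / (2 * ℓ ^ 2)) *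
        (1 / (Real.sqrt (2 * π) * s) * Real.exp (-(x - m) ^ 2 / (2 * s ^ 2))) =
      ℓ / Real.sqrt (ℓ ^ 2 + 2 * s ^ 2) *
        Real.exp ((-ℓ ^ 2 * (v - m) ^ 2 - ℓ ^ 2 * (u - m) ^ 2 - s ^ 2 * (v - u) ^ 2) /
          (2 * ℓ ^ 2 * (ℓ ^ 2 + 2 * s ^ 2))) := by
  have hℓ2 : (0:ℝ) < ℓ ^ 2 := by positivity
  have hs2 : (0:ℝ) < s ^ 2 := by positivity
  set b : ℝ := (ℓ ^ 2 + 2 * s ^ 2) / (2 * ℓ ^ 2 * s ^ 2) with hbdef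
  have hb : 0 < b := by positivity
  set c : ℝ := (u + v) / ℓ ^ 2 + m / s ^ 2 with hcdef
  set d : ℝ := -(u ^ 2 + v ^ 2) / (2 * ℓ ^ 2) - m ^ 2 / (2 * s ^ 2) with hddef
  have key : ∀ x : ℝ,
      Real.exp (-((x - u) ^ 2 + (x - v) ^ 2) / (2 * ℓ ^ 2)) *
        (1 / (Real.sqrt (2 * π) * s) * Real.exp (-(x - m) ^ 2 / (2 * s ^ 2)))
      = 1 / (Real.sqrt (2 * π) * s) * Real.exp (-b * x ^ 2 + c * x + d) := by
    intro x
    rw [mul_comm, mul_assoc, ← Real.exp_add]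
    congr 1
    rw [hbdef, hcdef, hddef]
    field_simp
    ring
  simp_rw [key]
  rw [integral_const_mul, integral_rexp_quadratic' hb]
  have hpi : (0:ℝ) < π := Real.pi_pos
  have h1 : Real.sqrt (π / b) = Real.sqrt (2 * π) * s * ℓ / Real.sqrt (ℓ ^ 2 + 2 * s ^ 2) := by
    have : π / b = (2 * π) * s ^ 2 * ℓ ^ 2 / (ℓ ^ 2 + 2 * s ^ 2) := by
      rw [hbdef]; field_simp
    rw [this, Real.sqrt_div (by positivity : (0:ℝ) ≤ 2 * π * s ^ 2 * ℓ ^ 2),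
      Real.sqrt_mul (by positivity), Real.sqrt_mul (by positivity),
      Real.sqrt_sq hs.le, Real.sqrt_sq hℓ.le]
  have h2 : d + c ^ 2 / (4 * b)
      = (-ℓ ^ 2 * (v - m) ^ 2 - ℓ ^ 2 * (u - m) ^ 2 - s ^ 2 * (v - u) ^ 2) /
          (2 * ℓ ^ 2 * (ℓ ^ 2 + 2 * s ^ 2)) := by
    rw [hbdef, hcdef, hddef]
    have hsum : (0:ℝ) < ℓ ^ 2 + 2 * s ^ 2 := by positivity
    field_simp
    ring
  rw [h1, h2]
  have hsq : Real.sqrt (2 * π) ≠ 0 := by positivity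
  field_simp
end

section
/- The IMSPE criterion for one existing data point at x = 1, a squared exponential kernel with unit lengthscale and unit variance, and standard Gaussian weighting measure, evaluated at a candidate point x_*, equals 1 - (1/(1 - exp(-(1-x_*)²)))·((1/√3)exp(-x_*²/3) + (1/√3)exp(-1/3) - (2/√3)exp(-(5x_*² - 8x_* + 5)/6)). -/
open MeasureTheory Real Matrix ProbabilityTheory

/-!
With `ρ = k(x_*, 1)` and unit prior variance, the posterior variance at `x` is
`1 - (k(x, x_*)² - 2ρ k(x, x_*) k(x, 1) + k(x, 1)²) / (1 - ρ²)`, so the IMSPE reduces to the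
Gaussian integrals `∫ k(x, a) k(x, b) dμ(x)`. Completing the square in
`(x - a)² + (x - b)² + x² = 3 (x - (a + b) / 3)² + 2 (a² - ab + b²) / 3` evaluates each of them to
`exp (-(a² - ab + b²) / 3) / √3`.
-/

/-- For a singular matrix both sides are the junk value `0` (`A⁻¹ = 0` and `x / 0 = 0`). -/
theorem dotProduct_inv_mulVec_fin_two {K : Type*} [Field K] (a b c d u v : K) :
    ![u, v] ⬝ᵥ (!![a, b; c, d]⁻¹ *ᵥ ![u, v]) =
      (d * u ^ 2 - (b + c) * u * v + a * v ^ 2) / (a * d - b * c) := by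
  rw [inv_def, det_fin_two_of, adjugate_fin_two_of, Ring.inverse_eq_inv']
  simp only [dotProduct, mulVec, Matrix.smul_apply, of_apply, cons_val', cons_val_fin_one,
    smul_eq_mul, Fin.sum_univ_two, cons_val_zero, cons_val_one]
  ring

theorem gaussianPDFReal_zero_one_apply (x : ℝ) :
    gaussianPDFReal 0 1 x = 1 / √(2 * π) * exp (-x ^ 2 / 2) := by
  simp [gaussianPDFReal]

theorem exp_mul_exp_mul_gaussianPDFReal_eq (a b x : ℝ) :
    exp (-(x - a) ^ 2 / 2) * exp (-(x - b) ^ 2 / 2) * gaussianPDFReal 0 1 x =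
      1 / √(2 * π) * exp (-(a ^ 2 - a * b + b ^ 2) / 3) *
        exp (-(3 / 2) * (x - (a + b) / 3) ^ 2) := by
  rw [gaussianPDFReal_zero_one_apply, mul_left_comm, mul_assoc, ← exp_add, ← exp_add, mul_assoc,
    ← exp_add]
  ring_nf

theorem integrable_exp_mul_exp_mul_gaussianPDFReal (a b : ℝ) :
    Integrable fun x ↦
      exp (-(x - a) ^ 2 / 2) * exp (-(x - b) ^ 2 / 2) * gaussianPDFReal 0 1 x := by
  simp_rw [exp_mul_exp_mul_gaussianPDFReal_eq]
  exact ((integrable_exp_neg_mul_sq (by norm_num)).comp_sub_right _).const_mul _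

theorem integral_exp_mul_exp_mul_gaussianPDFReal (a b : ℝ) :
    ∫ x, exp (-(x - a) ^ 2 / 2) * exp (-(x - b) ^ 2 / 2) * gaussianPDFReal 0 1 x =
      1 / √3 * exp (-(a ^ 2 - a * b + b ^ 2) / 3) := by
  simp_rw [exp_mul_exp_mul_gaussianPDFReal_eq]
  rw [integral_const_mul, integral_sub_right_eq_self (fun x ↦ exp (-(3 / 2) * x ^ 2)),
    integral_gaussian, show π / (3 / 2) = 2 * π / 3 by ring, sqrt_div (by positivity)]
  have : 0 < √(2 * π) := by positivity
  field_simp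

theorem integral_one_sub_div_mul {φ f g : ℝ → ℝ} (hφ : Integrable φ) (hφ_one : ∫ x, φ x = 1)
    (hff : Integrable fun x ↦ f x * f x * φ x) (hfg : Integrable fun x ↦ f x * g x * φ x)
    (hgg : Integrable fun x ↦ g x * g x * φ x) (r c : ℝ) :
    ∫ x, (1 - (f x ^ 2 - r * f x * g x + g x ^ 2) / c) * φ x =
      1 - ((∫ x, f x * f x * φ x) - r * (∫ x, f x * g x * φ x) + ∫ x, g x * g x * φ x) / c := by
  have hpoint : ∀ x, (1 - (f x ^ 2 - r * f x * g x + g x ^ 2) / c) * φ x =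
      φ x - c⁻¹ * (f x * f x * φ x - r * (f x * g x * φ x)) - c⁻¹ * (g x * g x * φ x) := by
    intro x; ring
  simp_rw [hpoint]
  rw [integral_sub, integral_sub, integral_const_mul, integral_const_mul, integral_sub,
    integral_const_mul, hφ_one]
  · ring
  all_goals fun_prop

theorem imspe_motivating_example_general (xstar : ℝ)
    (k : ℝ → ℝ → ℝ) (hk : k = fun a b => Real.exp (-(a - b) ^ 2 / 2))
    (M : Matrix (Fin 2) (Fin 2) ℝ)
    (hM : M = !![k xstar xstar, k xstar 1; k 1 xstar, k 1 1])
    (post : ℝ → ℝ)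
    (hpost : post = fun xr =>
      k xr xr - dotProduct ![k xr xstar, k xr 1] (M⁻¹.mulVec ![k xr xstar, k xr 1])) :
    ∫ xr : ℝ, post xr * (1 / Real.sqrt (2 * π) * Real.exp (-xr ^ 2 / 2)) =
      1 - 1 / (1 - Real.exp (-(1 - xstar) ^ 2)) *
        (1 / Real.sqrt 3 * Real.exp (-xstar ^ 2 / 3) +
          1 / Real.sqrt 3 * Real.exp (-1 / 3) -
          2 / Real.sqrt 3 * Real.exp (-(5 * xstar ^ 2 - 8 * xstar + 5) / 6)) := by
  set ρ := exp (-(xstar - 1) ^ 2 / 2)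
  have hpost_eq : ∀ x, post x =
      1 - (exp (-(x - xstar) ^ 2 / 2) ^ 2 - 2 * ρ * exp (-(x - xstar) ^ 2 / 2) *
        exp (-(x - 1) ^ 2 / 2) + exp (-(x - 1) ^ 2 / 2) ^ 2) / (1 - ρ ^ 2) := by
    have hk_diag : ∀ a, k a a = 1 := by simp [hk]
    have hk_symm : ∀ a b, k a b = k b a := by subst hk; intro a b; ring_nf
    intro x
    simp only [hpost, hM]
    rw [dotProduct_inv_mulVec_fin_two, hk_diag, hk_diag, hk_diag, hk_symm 1]
    simp only [hk, ρ]
    ring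
  have hρ_sq : ρ ^ 2 = exp (-(1 - xstar) ^ 2) := by
    rw [← exp_nat_mul]; ring_nf
  have hρ_cross : ρ * exp (-(xstar ^ 2 - xstar * 1 + 1 ^ 2) / 3) =
      exp (-(5 * xstar ^ 2 - 8 * xstar + 5) / 6) := by
    rw [← exp_add]; ring_nf
  simp_rw [hpost_eq, ← gaussianPDFReal_zero_one_apply]
  rw [integral_one_sub_div_mul (integrable_gaussianPDFReal 0 1)
      (integral_gaussianPDFReal_eq_one 0 one_ne_zero)
      (integrable_exp_mul_exp_mul_gaussianPDFReal _ _)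
      (integrable_exp_mul_exp_mul_gaussianPDFReal _ _)
      (integrable_exp_mul_exp_mul_gaussianPDFReal _ _),
    integral_exp_mul_exp_mul_gaussianPDFReal, integral_exp_mul_exp_mul_gaussianPDFReal,
    integral_exp_mul_exp_mul_gaussianPDFReal, hρ_sq]
  linear_combination (norm := ring_nf) (2 / √3 / (1 - exp (-(1 - xstar) ^ 2))) * hρ_cross

/-- The IMSPE criterion for one existing data point at `x = 1`, squared exponential
kernel with unit lengthscale and unit signal variance, and standard Gaussian
weighting measure, evaluated in closed form at a candidate point `x_*`. -/
theorem imspe_motivating_example (xstar : ℝ) (hx : xstar ≠ 1)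
    (k : ℝ → ℝ → ℝ) (hk : k = fun a b => Real.exp (-(a - b) ^ 2 / 2))
    (M : Matrix (Fin 2) (Fin 2) ℝ)
    (hM : M = !![k xstar xstar, k xstar 1; k 1 xstar, k 1 1])
    (post : ℝ → ℝ)
    (hpost : post = fun xr =>
      k xr xr - dotProduct ![k xr xstar, k xr 1] (M⁻¹.mulVec ![k xr xstar, k xr 1])) :
    ∫ xr : ℝ, post xr * (1 / Real.sqrt (2 * π) * Real.exp (-xr ^ 2 / 2)) =
      1 - 1 / (1 - Real.exp (-(1 - xstar) ^ 2)) *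
        (1 / Real.sqrt 3 * Real.exp (-xstar ^ 2 / 3) +
          1 / Real.sqrt 3 * Real.exp (-1 / 3) -
          2 / Real.sqrt 3 * Real.exp (-(5 * xstar ^ 2 - 8 * xstar + 5) / 6)) :=
  imspe_motivating_example_general xstar k hk M hM post hpost
end
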